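/- Let A be a ring, J a two-sided ideal of A such that the blow-up ring Bl_J(A) is left Noetherian, and h a central element of A. Then for every finitely generated left A-module M: (1) the natural map M^∧/hM^∧ → (M/hM)^∧ between J-adic completions is an isomorphism; (2) if multiplication by h is injective on M, then multiplication by h is injective on the J-adic completion M^∧. -/

import Mathlib

open scoped Pointwise
open Polynomial

section PowSet

variable {A : Type*} [Ring A]

/-- The `n`-th power of a (two-sided) ideal `J` of a ring `A`, with the convention `J ^ 0 = A`,
realized as an additive subgroup of `A`. -/
def powSet (J : Ideal A) : ℕ → AddSubgroup A
  | 0 => ⊤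
  | 1 => J.toAddSubgroup
  | n + 2 => AddSubgroup.closure ((J : Set A) * (powSet J (n + 1) : Set A))

theorem powSet_succ_succ (J : Ideal A) (n : ℕ) :
    powSet J (n + 2) = AddSubgroup.closure ((J : Set A) * (powSet J (n + 1) : Set A)) := rfl

theorem powSet_mul_mem_left (J : Ideal A) :
    ∀ (n : ℕ) (a : A) {x : A}, x ∈ powSet J n → a * x ∈ powSet J n
  | 0, a, x, _ => AddSubgroup.mem_top _
  | 1, a, x, hx => J.mul_mem_left a hx
  | n + 2, a, x, hx => by
    induction hx using AddSubgroup.closure_induction with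
    | mem z hz =>
      obtain ⟨u, hu, v, hv, rfl⟩ := hz
      exact AddSubgroup.subset_closure
        ⟨a * u, J.mul_mem_left a hu, v, hv, mul_assoc a u v⟩
    | zero => simpa using (powSet J (n + 2)).zero_mem
    | add x y hx hy ihx ihy => simpa [mul_add] using add_mem ihx ihy
    | neg x hx ihx => simpa [mul_neg] using neg_mem ihx

theorem powSet_mul_mem_right (J : Ideal A) (hJ : ∀ x ∈ J, ∀ a : A, x * a ∈ J) :
    ∀ (n : ℕ) (a : A) {x : A}, x ∈ powSet J n → x * a ∈ powSet J n
  | 0, a, x, _ => AddSubgroup.mem_top _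
  | 1, a, x, hx => hJ x hx a
  | n + 2, a, x, hx => by
    induction hx using AddSubgroup.closure_induction with
    | mem z hz =>
      obtain ⟨u, hu, v, hv, rfl⟩ := hz
      exact AddSubgroup.subset_closure
        ⟨u, hu, v * a, powSet_mul_mem_right J hJ (n + 1) a hv, (mul_assoc u v a).symm⟩
    | zero => simpa using (powSet J (n + 2)).zero_mem
    | add x y hx hy ihx ihy => simpa [add_mul] using add_mem ihx ihy
    | neg x hx ihx => simpa [neg_mul] using neg_mem ihx

theorem powSet_mul_mem (J : Ideal A) (hJ : ∀ x ∈ J, ∀ a : A, x * a ∈ J) :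
    ∀ (i j : ℕ) {x y : A}, x ∈ powSet J i → y ∈ powSet J j → x * y ∈ powSet J (i + j)
  | 0, j, x, y, _, hy => by simpa using powSet_mul_mem_left J j x hy
  | 1, 0, x, y, hx, _ => by simpa using powSet_mul_mem_right J hJ 1 y hx
  | 1, j + 1, x, y, hx, hy => by
    rw [show 1 + (j + 1) = j + 2 from by omega, powSet_succ_succ]
    exact AddSubgroup.subset_closure ⟨x, hx, y, hy, rfl⟩
  | i + 2, j, x, y, hx, hy => by
    rw [show i + 2 + j = (i + j) + 2 from by omega, powSet_succ_succ]
    induction hx using AddSubgroup.closure_induction with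
    | mem z hz =>
      obtain ⟨u, hu, v, hv, rfl⟩ := hz
      have hvy : v * y ∈ powSet J (i + 1 + j) := powSet_mul_mem J hJ (i + 1) j hv hy
      rw [show i + 1 + j = i + j + 1 from by omega] at hvy
      exact AddSubgroup.subset_closure ⟨u, hu, v * y, hvy, (mul_assoc u v y).symm⟩
    | zero =>
      simpa using (AddSubgroup.closure ((J : Set A) * (powSet J (i + j + 1) : Set A))).zero_mem
    | add x₁ x₂ hx₁ hx₂ ih₁ ih₂ => simpa [add_mul] using add_mem ih₁ ih₂
    | neg x₁ hx₁ ih₁ => simpa [neg_mul] using neg_mem ih₁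

end PowSet

section BlowUp

variable {A : Type*} [Ring A]

/-- The blow-up ring `Bl_J(A) = ⊕_{i ≥ 0} J^i` of a two-sided ideal `J ⊆ A`, realized as the
subring of the polynomial ring `A[X]` consisting of the polynomials whose `X^i`-coefficient
lies in `J^i` for every `i`. -/
def blowUp (J : Ideal A) (hJ : ∀ x ∈ J, ∀ a : A, x * a ∈ J) : Subring A[X] where
  carrier := {p : A[X] | ∀ i : ℕ, p.coeff i ∈ powSet J i}
  zero_mem' := fun i => by
    simp only [Polynomial.coeff_zero]; exact (powSet J i).zero_mem
  one_mem' := fun i => by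
    rcases i with _ | i
    · exact AddSubgroup.mem_top _
    · simp only [Polynomial.coeff_one, Nat.succ_ne_zero, if_neg (Nat.succ_ne_zero i).symm]
      simpa using (powSet J (i + 1)).zero_mem
  add_mem' := fun {p q} hp hq i => by
    simpa [Polynomial.coeff_add] using add_mem (hp i) (hq i)
  neg_mem' := fun {p} hp i => by
    simpa [Polynomial.coeff_neg] using neg_mem (hp i)
  mul_mem' := fun {p q} hp hq n => by
    rw [Polynomial.coeff_mul]
    refine AddSubgroup.sum_mem _ fun c hc => ?_
    have h := powSet_mul_mem J hJ c.1 c.2 (hp c.1) (hq c.2)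
    rwa [show c.1 + c.2 = n from by simpa using hc] at h

end BlowUp

section Completion

variable {A : Type*} [Ring A]

theorem powSet_succ_le (J : Ideal A) :
    ∀ n : ℕ, powSet J (n + 1) ≤ powSet J n
  | 0 => le_top
  | n + 1 => by
    rw [powSet_succ_succ]
    refine (AddSubgroup.closure_le _).mpr ?_
    rintro z ⟨u, hu, v, hv, rfl⟩
    exact powSet_mul_mem_left J (n + 1) u hv

/-- For a subset `S ⊆ A` and a submodule `N` of an `A`-module `M`, the submodule `S·N` of `M`
spanned by all products `x • m` with `x ∈ S`, `m ∈ N`. -/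
def jsmul (S : Set A) {M : Type*} [AddCommGroup M] [Module A M] (N : Submodule A M) :
    Submodule A M :=
  Submodule.span A {z | ∃ x ∈ S, ∃ m ∈ N, z = x • m}

/-- The submodule `J^n M` of an `A`-module `M`. -/
def jadic (J : Ideal A) (M : Type*) [AddCommGroup M] [Module A M] (n : ℕ) : Submodule A M :=
  jsmul ((powSet J n : AddSubgroup A) : Set A) (⊤ : Submodule A M)

theorem jadic_succ_le (J : Ideal A) (M : Type*) [AddCommGroup M] [Module A M] (n : ℕ) :
    jadic J M (n + 1) ≤ jadic J M n := by
  refine Submodule.span_mono ?_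
  rintro z ⟨x, hx, m, hm, rfl⟩
  exact ⟨x, powSet_succ_le J n hx, m, hm, rfl⟩

/-- The transition map `M/J^{n+1}M → M/J^nM`. -/
def transition (J : Ideal A) (M : Type*) [AddCommGroup M] [Module A M] (n : ℕ) :
    (M ⧸ jadic J M (n + 1)) →ₗ[A] M ⧸ jadic J M n :=
  Submodule.mapQ _ _ LinearMap.id (fun _ hx => jadic_succ_le J M n hx)

/-- The `J`-adic completion `M^∧ = lim_n M/J^nM` of an `A`-module `M`, realized as the
module of compatible sequences in `∀ n, M/J^nM`. -/
def adicCompletion (J : Ideal A) (M : Type*) [AddCommGroup M] [Module A M] :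
    Submodule A (∀ n : ℕ, M ⧸ jadic J M n) where
  carrier := {f | ∀ n : ℕ, transition J M n (f (n + 1)) = f n}
  add_mem' := fun {f g} hf hg n => by
    simp only [Pi.add_apply, map_add, hf n, hg n]
  zero_mem' := fun n => by simp
  smul_mem' := fun a f hf n => by
    simp only [Pi.smul_apply, map_smul, hf n]

theorem jadic_le_comap (J : Ideal A) {M M₂ : Type*} [AddCommGroup M] [Module A M]
    [AddCommGroup M₂] [Module A M₂] (f : M →ₗ[A] M₂) (n : ℕ) :
    jadic J M n ≤ (jadic J M₂ n).comap f := by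
  rw [jadic, jsmul, Submodule.span_le]
  rintro z ⟨x, hx, m, _, rfl⟩
  simp only [SetLike.mem_coe, Submodule.mem_comap, map_smul]
  exact Submodule.subset_span ⟨x, hx, f m, Submodule.mem_top, rfl⟩

/-- The map `M/J^nM → M₂/J^nM₂` induced by a linear map `f : M → M₂`. -/
def inducedQ (J : Ideal A) {M M₂ : Type*} [AddCommGroup M] [Module A M]
    [AddCommGroup M₂] [Module A M₂] (f : M →ₗ[A] M₂) (n : ℕ) :
    (M ⧸ jadic J M n) →ₗ[A] M₂ ⧸ jadic J M₂ n :=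
  Submodule.mapQ _ _ f (jadic_le_comap J f n)

theorem transition_inducedQ (J : Ideal A) {M M₂ : Type*} [AddCommGroup M] [Module A M]
    [AddCommGroup M₂] [Module A M₂] (f : M →ₗ[A] M₂) (n : ℕ)
    (x : M ⧸ jadic J M (n + 1)) :
    transition J M₂ n (inducedQ J f (n + 1) x) = inducedQ J f n (transition J M n x) := by
  obtain ⟨m, rfl⟩ := Submodule.Quotient.mk_surjective _ x
  simp [transition, inducedQ, Submodule.mapQ_apply]

/-- The map `M^∧ → M₂^∧` between `J`-adic completions induced by a linear map `f : M → M₂`;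
this is the natural functorial structure of the `J`-adic completion. -/
def completionMap (J : Ideal A) {M M₂ : Type*} [AddCommGroup M] [Module A M]
    [AddCommGroup M₂] [Module A M₂] (f : M →ₗ[A] M₂) :
    adicCompletion J M →ₗ[A] adicCompletion J M₂ where
  toFun g := ⟨fun n => inducedQ J f n (g.1 n), fun n => by
    rw [transition_inducedQ, g.2 n]⟩
  map_add' g₁ g₂ := Subtype.ext (funext fun n => by
    simp [Submodule.coe_add, Pi.add_apply, map_add])
  map_smul' a g := Subtype.ext (funext fun n => by
    simp [Submodule.coe_smul, Pi.smul_apply, map_smul])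

end Completion

section CentralSmul

variable {A : Type*} [Ring A]

/-- Multiplication by a central element `h ∈ A` on a left `A`-module `M`, as an `A`-linear
endomorphism of `M`. -/
def centralSmul (h : A) (hcen : ∀ a : A, h * a = a * h) (M : Type*) [AddCommGroup M]
    [Module A M] : M →ₗ[A] M where
  toFun m := h • m
  map_add' := smul_add h
  map_smul' r m := by
    show h • (r • m) = r • (h • m)
    rw [smul_smul, smul_smul, hcen r]

end CentralSmul

/-!
Artin–Rees: since `Bl_J(A)` is left Noetherian, the Rees module `⊕ₙ (J^n A^k ∩ N) Xⁿ` of a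
submodule `N ⊆ A^k` is finitely generated, say in degrees `≤ c`, whence
`J^{n+c}M ∩ N ⊆ J^n N` for every finitely generated `M` and `N ⊆ M`. For `N = hM` this gives
`J^{n+c}M ∩ hM ⊆ h J^n M`.

If `x ∈ M^∧` dies in `(M/hM)^∧`, write `x ≡ h v n` modulo `J^n M`. The differences
`h (v (n+1+c) - v (n+c))` lie in `J^{n+c}M ∩ hM`, so they equal `h w n` with `w n ∈ J^n M`,
and `u = v c + ∑ w i` converges in `M^∧` with `h u = x`. If `h` is injective on `M` and
`h x = 0` with representatives `m n`, then `h m (n+c) ∈ J^{n+c}M ∩ hM` forces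
`m (n+c) ∈ J^n M`, so `x = 0`. Surjectivity holds for the completion of any surjection: lift
the successive differences of representatives and sum them.
-/

section AdicCompletion

variable {A : Type*} [Ring A] (J : Ideal A) {M M₂ : Type*} [AddCommGroup M] [Module A M]
  [AddCommGroup M₂] [Module A M₂]

theorem powSet_antitone : Antitone (powSet J) :=
  antitone_nat_of_succ_le (powSet_succ_le J)

theorem jadic_antitone : Antitone (jadic J M) :=
  antitone_nat_of_succ_le (jadic_succ_le J M)

theorem smul_mem_jadic {n : ℕ} {x : A} (hx : x ∈ powSet J n) (m : M) : x • m ∈ jadic J M n :=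
  Submodule.subset_span ⟨x, hx, m, Submodule.mem_top, rfl⟩

theorem map_jadic_of_surjective {f : M →ₗ[A] M₂} (hf : Function.Surjective f) (n : ℕ) :
    (jadic J M n).map f = jadic J M₂ n := by
  refine le_antisymm (Submodule.map_le_iff_le_comap.mpr (jadic_le_comap J f n)) ?_
  rw [jadic, jsmul, Submodule.span_le]
  rintro z ⟨x, hx, m₂, -, rfl⟩
  obtain ⟨m, rfl⟩ := hf m₂
  exact ⟨x • m, smul_mem_jadic J hx m, map_smul f x m⟩

theorem map_jsmul_comap_le (S : Set A) (f : M →ₗ[A] M₂) (N : Submodule A M₂) :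
    (jsmul S (N.comap f)).map f ≤ jsmul S N := by
  rw [jsmul, Submodule.map_span, Submodule.span_le]
  rintro z ⟨w, ⟨x, hx, m, hm, rfl⟩, rfl⟩
  exact Submodule.subset_span ⟨x, hx, f m, hm, map_smul f x m⟩

theorem jadic_pi_apply_mem (hJ : ∀ x ∈ J, ∀ a : A, x * a ∈ J) {ι : Type*} {n : ℕ} {v : ι → A}
    (hv : v ∈ jadic J (ι → A) n) (i : ι) : v i ∈ powSet J n := by
  induction hv using Submodule.span_induction with
  | mem z hz =>
    obtain ⟨x, hx, m, -, rfl⟩ := hz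
    exact powSet_mul_mem_right J hJ n (m i) hx
  | zero => exact (powSet J n).zero_mem
  | add a b _ _ iha ihb => exact add_mem iha ihb
  | smul a x _ ih => exact powSet_mul_mem_left J n a ih

theorem transition_mk (n : ℕ) (x : M) :
    transition J M n (Submodule.Quotient.mk x) = Submodule.Quotient.mk x := rfl

theorem inducedQ_mk (f : M →ₗ[A] M₂) (n : ℕ) (x : M) :
    inducedQ J f n (Submodule.Quotient.mk x) = Submodule.Quotient.mk (f x) := rfl

theorem sub_mem_jadic_of_mk_eq {x : adicCompletion J M} {m : ℕ → M}
    (hm : ∀ n, Submodule.Quotient.mk (m n) = x.1 n) {n k : ℕ} (hnk : n ≤ k) :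
    m k - m n ∈ jadic J M n := by
  induction k, hnk using Nat.le_induction with
  | base => simp
  | succ k hnk ih =>
    have hstep := x.2 k
    rw [← hm, ← hm, transition_mk, Submodule.Quotient.eq] at hstep
    simpa using add_mem (jadic_antitone J hnk hstep) ih

def adicSum (x : M) (d : ℕ → M) (hd : ∀ n, d n ∈ jadic J M n) : adicCompletion J M :=
  ⟨fun n => Submodule.Quotient.mk (x + ∑ i ∈ Finset.range n, d i), fun n =>
    (Submodule.Quotient.eq _).mpr (by simpa [Finset.sum_range_succ] using hd n)⟩

theorem completionMap_surjective {f : M →ₗ[A] M₂} (hf : Function.Surjective f) :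
    Function.Surjective (completionMap J f) := by
  intro y
  choose q hq using fun n => Submodule.Quotient.mk_surjective _ (y.1 n)
  choose d hd hfd using fun n => Submodule.mem_map.mp <| by
    rw [map_jadic_of_surjective J hf]
    exact sub_mem_jadic_of_mk_eq J hq (Nat.le_succ n)
  obtain ⟨x, hx⟩ := hf (q 0)
  refine ⟨adicSum J x d hd, Subtype.ext <| funext fun n => ?_⟩
  show Submodule.Quotient.mk (f (x + ∑ i ∈ Finset.range n, d i)) = y.1 n
  simp only [map_add, map_sum, hx, hfd, Finset.sum_range_sub, add_sub_cancel, hq]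

theorem smul_adicCompletion_eq_zero {a : A} (ha : ∀ y : M, a • y = 0) (x : adicCompletion J M) :
    a • x = 0 := by
  refine Subtype.ext <| funext fun n => ?_
  obtain ⟨y, hy⟩ := Submodule.Quotient.mk_surjective _ (x.1 n)
  show a • x.1 n = 0
  rw [← hy, ← Submodule.Quotient.mk_smul, ha, Submodule.Quotient.mk_zero]

theorem exists_mem_mk_eq_of_completionMap_mkQ_eq_zero {N : Submodule A M}
    {x : adicCompletion J M} (hx : completionMap J N.mkQ x = 0) (n : ℕ) :
    ∃ y ∈ N, Submodule.Quotient.mk y = x.1 n := by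
  obtain ⟨m, hm⟩ := Submodule.Quotient.mk_surjective _ (x.1 n)
  have h0 : N.mkQ m ∈ jadic J (M ⧸ N) n := by
    rw [← Submodule.Quotient.mk_eq_zero, ← inducedQ_mk, hm]
    exact congr_arg (·.1 n) hx
  rw [← map_jadic_of_surjective J N.mkQ_surjective] at h0
  obtain ⟨j, hj, hjm⟩ := h0
  refine ⟨m - j, (Submodule.Quotient.eq N).mp hjm.symm, ?_⟩
  rw [← hm, Submodule.Quotient.eq]
  simpa using hj

end AdicCompletion

section ArtinRees

open Finset.HasAntidiagonal

variable {A : Type*} [Ring A] (J : Ideal A) (hJ : ∀ x ∈ J, ∀ a : A, x * a ∈ J) {ι : Type*}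

noncomputable def coeffVec (n : ℕ) : (ι → blowUp J hJ) →+ (ι → A) :=
  AddMonoidHom.compLeft ((lcoeff A n).toAddMonoidHom.comp (blowUp J hJ).subtype.toAddMonoidHom) ι

theorem coeffVec_apply (n : ℕ) (f : ι → blowUp J hJ) (i : ι) :
    coeffVec J hJ n f i = (f i : A[X]).coeff n := rfl

theorem coeffVec_smul (n : ℕ) (r : blowUp J hJ) (f : ι → blowUp J hJ) :
    coeffVec J hJ n (r • f) =
      ∑ p ∈ antidiagonal n, (r : A[X]).coeff p.1 • coeffVec J hJ p.2 f := by
  funext i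
  simp [coeffVec_apply, coeff_mul, Finset.sum_apply]

/-- The Rees module `⊕ₙ (J^n A^ι ∩ N) Xⁿ` of `N ⊆ A^ι`, over `Bl_J(A)`. -/
def reesModule (N : Submodule A (ι → A)) : Submodule (blowUp J hJ) (ι → blowUp J hJ) where
  carrier := {f | ∀ n, coeffVec J hJ n f ∈ N}
  zero_mem' n := by simp
  add_mem' hf hg n := by simpa using N.add_mem (hf n) (hg n)
  smul_mem' r f hf n := by
    rw [coeffVec_smul]
    exact N.sum_mem fun p _ => N.smul_mem _ (hf p.2)

noncomputable def monomialVec (d : ℕ) (v : ι → A) (hv : ∀ i, v i ∈ powSet J d) :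
    ι → blowUp J hJ :=
  fun i => ⟨monomial d (v i), fun j => by
    rw [coeff_monomial]
    split_ifs with hdj
    exacts [hdj ▸ hv i, zero_mem _]⟩

theorem coeffVec_monomialVec {d : ℕ} {v : ι → A} (hv : ∀ i, v i ∈ powSet J d) (n : ℕ) :
    coeffVec J hJ n (monomialVec J hJ d v hv) = if d = n then v else 0 := by
  funext i
  simp only [coeffVec_apply, monomialVec, coeff_monomial]
  split_ifs <;> rfl

theorem monomialVec_mem_reesModule {N : Submodule A (ι → A)} {d : ℕ} {v : ι → A}
    (hv : ∀ i, v i ∈ powSet J d) (hvN : v ∈ N) : monomialVec J hJ d v hv ∈ reesModule J hJ N := by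
  intro n
  rw [coeffVec_monomialVec]
  split_ifs
  exacts [hvN, N.zero_mem]

/-- The `X^{n+c}`-coefficient of `∑ r_g • g` is a sum of terms `(r_g)_p (g)_q` with
`p + q = n + c`; those with `q > c` vanish, and the others have `(r_g)_p ∈ J^p ⊆ J^n`. -/
theorem coeffVec_add_mem_jsmul {N : Submodule A (ι → A)} {s : Finset (ι → blowUp J hJ)}
    (hs : (s : Set (ι → blowUp J hJ)) ⊆ reesModule J hJ N) {c : ℕ}
    (hc : ∀ g ∈ s, ∀ i, (g i : A[X]).natDegree ≤ c) {F : ι → blowUp J hJ}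
    (hF : F ∈ Submodule.span (blowUp J hJ) (s : Set (ι → blowUp J hJ))) (n : ℕ) :
    coeffVec J hJ (n + c) F ∈ jsmul (powSet J n) N := by
  obtain ⟨r, -, rfl⟩ := Submodule.mem_span_finset.mp hF
  rw [map_sum]
  refine Submodule.sum_mem _ fun g hg => ?_
  rw [coeffVec_smul]
  refine Submodule.sum_mem _ fun p hp => ?_
  rw [mem_antidiagonal] at hp
  by_cases hpc : p.2 ≤ c
  · exact Submodule.subset_span
      ⟨_, powSet_antitone J (by omega : n ≤ p.1) ((r g).2 p.1), _, hs hg p.2, rfl⟩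
  · have hzero : coeffVec J hJ p.2 g = 0 := funext fun i =>
      coeff_eq_zero_of_natDegree_lt ((hc g hg i).trans_lt (not_le.mp hpc))
    rw [hzero, smul_zero]
    exact zero_mem _

theorem artinRees_pi [Fintype ι] (hbl : IsNoetherianRing (blowUp J hJ))
    (N : Submodule A (ι → A)) :
    ∃ c, ∀ n, jadic J (ι → A) (n + c) ⊓ N ≤ jsmul (powSet J n) N := by
  have : IsNoetherian (blowUp J hJ) (ι → blowUp J hJ) := isNoetherian_pi
  obtain ⟨s, hs⟩ := IsNoetherian.noetherian (reesModule J hJ N)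
  obtain ⟨c, hc⟩ : ∃ c, ∀ g ∈ s, ∀ i, (g i : A[X]).natDegree ≤ c := by
    let deg (g : ι → blowUp J hJ) : ℕ := Finset.univ.sup fun i => (g i : A[X]).natDegree
    exact ⟨s.sup deg, fun g hg i =>
      (Finset.le_sup (Finset.mem_univ i)).trans (Finset.le_sup (f := deg) hg)⟩
  refine ⟨c, fun n v ⟨hvJ, hvN⟩ => ?_⟩
  have hv := jadic_pi_apply_mem J hJ hvJ
  have hmem := hs ▸ monomialVec_mem_reesModule J hJ hv hvN
  simpa [coeffVec_monomialVec] using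
    coeffVec_add_mem_jsmul J hJ (hs ▸ Submodule.subset_span) hc hmem n

theorem artinRees (hbl : IsNoetherianRing (blowUp J hJ)) (M : Type*) [AddCommGroup M]
    [Module A M] [Module.Finite A M] (N : Submodule A M) :
    ∃ c, ∀ n, jadic J M (n + c) ⊓ N ≤ jsmul (powSet J n) N := by
  obtain ⟨k, π, hπ⟩ := Module.Finite.exists_fin' A M
  obtain ⟨c, hc⟩ := artinRees_pi J hJ hbl (N.comap π)
  refine ⟨c, fun n y ⟨hyJ, hyN⟩ => ?_⟩
  rw [← map_jadic_of_surjective J hπ] at hyJ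
  obtain ⟨v, hv, rfl⟩ := hyJ
  exact map_jsmul_comap_le _ π N ⟨v, hc n ⟨hv, hyN⟩, rfl⟩

end ArtinRees

section CentralElement

variable {A : Type*} [Ring A] (J : Ideal A) (h : A) (hcen : ∀ a : A, h * a = a * h)
  {M : Type*} [AddCommGroup M] [Module A M]

theorem centralSmul_apply (m : M) : centralSmul h hcen M m = h • m := rfl

theorem jsmul_range_centralSmul_le (n : ℕ) :
    jsmul (powSet J n) (LinearMap.range (centralSmul h hcen M)) ≤
      (jadic J M n).map (centralSmul h hcen M) := by
  rw [jsmul, Submodule.span_le]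
  rintro z ⟨x, hx, _, ⟨u, rfl⟩, rfl⟩
  refine ⟨x • u, smul_mem_jadic J hx u, ?_⟩
  simp only [centralSmul_apply, smul_smul, hcen x]

theorem exists_jadic_inf_range_centralSmul_le (hJ : ∀ x ∈ J, ∀ a : A, x * a ∈ J)
    (hbl : IsNoetherianRing (blowUp J hJ)) [Module.Finite A M] :
    ∃ c, ∀ n, jadic J M (n + c) ⊓ LinearMap.range (centralSmul h hcen M) ≤
      (jadic J M n).map (centralSmul h hcen M) := by
  obtain ⟨c, hc⟩ := artinRees J hJ hbl M (LinearMap.range (centralSmul h hcen M))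
  exact ⟨c, fun n => (hc n).trans (jsmul_range_centralSmul_le J h hcen n)⟩

theorem range_centralSmul_le_ker_completionMap :
    LinearMap.range (centralSmul h hcen (adicCompletion J M)) ≤
      LinearMap.ker (completionMap J (LinearMap.range (centralSmul h hcen M)).mkQ) := by
  rintro _ ⟨x, rfl⟩
  rw [LinearMap.mem_ker, centralSmul_apply, map_smul]
  refine smul_adicCompletion_eq_zero J (fun y => ?_) _
  obtain ⟨m, rfl⟩ := Submodule.Quotient.mk_surjective _ y
  rw [← Submodule.Quotient.mk_smul, Submodule.Quotient.mk_eq_zero]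
  exact ⟨m, rfl⟩

variable {J h hcen} {c : ℕ}

theorem mem_range_centralSmul_of_mk_smul_eq
    (hc : ∀ n, jadic J M (n + c) ⊓ LinearMap.range (centralSmul h hcen M) ≤
      (jadic J M n).map (centralSmul h hcen M))
    {x : adicCompletion J M} {v : ℕ → M} (hv : ∀ n, Submodule.Quotient.mk (h • v n) = x.1 n) :
    x ∈ LinearMap.range (centralSmul h hcen (adicCompletion J M)) := by
  choose w hw hhw using fun n => hc n
    ⟨sub_mem_jadic_of_mk_eq J hv (by omega : n + c ≤ n + 1 + c), v (n + 1 + c) - v (n + c),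
      smul_sub h _ _⟩
  simp only [centralSmul_apply] at hhw
  have hsum : ∀ n, h • (v c + ∑ i ∈ Finset.range n, w i) = h • v (n + c) := fun n => by
    rw [smul_add, Finset.smul_sum]
    simp only [hhw]
    rw [Finset.sum_range_sub (fun i => h • v (i + c)), zero_add, add_sub_cancel]
  refine ⟨adicSum J (v c) w hw, Subtype.ext <| funext fun n => ?_⟩
  show h • Submodule.Quotient.mk (v c + ∑ i ∈ Finset.range n, w i) = x.1 n
  rw [← Submodule.Quotient.mk_smul, hsum, ← hv n, Submodule.Quotient.eq]
  exact sub_mem_jadic_of_mk_eq J hv (Nat.le_add_right n c)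

theorem ker_completionMap_le_range_centralSmul
    (hc : ∀ n, jadic J M (n + c) ⊓ LinearMap.range (centralSmul h hcen M) ≤
      (jadic J M n).map (centralSmul h hcen M)) :
    LinearMap.ker (completionMap J (LinearMap.range (centralSmul h hcen M)).mkQ) ≤
      LinearMap.range (centralSmul h hcen (adicCompletion J M)) := by
  intro x hx
  choose y hyN hy using exists_mem_mk_eq_of_completionMap_mkQ_eq_zero J hx
  choose v hv using hyN
  exact mem_range_centralSmul_of_mk_smul_eq hc (v := v) fun n => by
    rw [← centralSmul_apply h hcen, hv, hy]

theorem injective_centralSmul_adicCompletion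
    (hc : ∀ n, jadic J M (n + c) ⊓ LinearMap.range (centralSmul h hcen M) ≤
      (jadic J M n).map (centralSmul h hcen M))
    (hinj : Function.Injective (centralSmul h hcen M)) :
    Function.Injective (centralSmul h hcen (adicCompletion J M)) := by
  rw [← LinearMap.ker_eq_bot, LinearMap.ker_eq_bot']
  intro x hx
  choose m hm using fun n => Submodule.Quotient.mk_surjective _ (x.1 n)
  have hsmul : ∀ n, h • m n ∈ jadic J M n := fun n => by
    rw [← Submodule.Quotient.mk_eq_zero, Submodule.Quotient.mk_smul, hm]
    exact congr_arg (·.1 n) hx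
  refine Subtype.ext <| funext fun n => ?_
  obtain ⟨w, hw, hhw⟩ := hc n ⟨hsmul (n + c), m (n + c), rfl⟩
  have hmJ : m (n + c) ∈ jadic J M n := hinj hhw ▸ hw
  show x.1 n = 0
  rw [← hm, Submodule.Quotient.mk_eq_zero]
  simpa using sub_mem hmJ (sub_mem_jadic_of_mk_eq J hm (Nat.le_add_right n c))

end CentralElement

/-- Let `A` be a ring, `J` a two-sided ideal of `A` such that the blow-up ring
`Bl_J(A)` is left Noetherian, and `h` a central element of `A`. Then for every finitely
generated left `A`-module `M`:
(1) the natural map `M^∧/hM^∧ → (M/hM)^∧` is an isomorphism (expressed here by saying that the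
natural map `M^∧ → (M/hM)^∧` is surjective with kernel `h·M^∧`), and
(2) if multiplication by `h` is injective on `M`, then it is injective on `M^∧`. -/
theorem completion_flat_basechange {A : Type*} [Ring A] (J : Ideal A)
    (hJtwoSided : ∀ x ∈ J, ∀ a : A, x * a ∈ J)
    (hbl : IsNoetherianRing (blowUp J hJtwoSided))
    (h : A) (hcen : ∀ a : A, h * a = a * h)
    (M : Type*) [AddCommGroup M] [Module A M] [Module.Finite A M] :
    (Function.Surjective
        (completionMap J (Submodule.mkQ (LinearMap.range (centralSmul h hcen M)))) ∧
      LinearMap.ker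
          (completionMap J (Submodule.mkQ (LinearMap.range (centralSmul h hcen M)))) =
        LinearMap.range (centralSmul h hcen (adicCompletion J M))) ∧
    (Function.Injective (centralSmul h hcen M) →
      Function.Injective (centralSmul h hcen (adicCompletion J M))) := by
  obtain ⟨c, hc⟩ := exists_jadic_inf_range_centralSmul_le J h hcen hJtwoSided hbl (M := M)
  exact ⟨⟨completionMap_surjective J (Submodule.mkQ_surjective _),
    le_antisymm (ker_completionMap_le_range_centralSmul hc)
      (range_centralSmul_le_ker_completionMap J h hcen)⟩,
    injective_centralSmul_adicCompletion hc⟩
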